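/- Let f : R → R' be a homomorphism of commutative rings such that every element r' ∈ R' can be written r' = u·f(r) with u ∈ R' invertible and r ∈ R. Let S' ⊆ R' be a countable multiplicative subset. Then there exists a countable multiplicative subset S ⊆ R such that R' ⊗_R S⁻¹R ≅ S'⁻¹R' as R'-algebras. -/

import Mathlib

/-!
Lift each `s' ∈ S'` to some `g s' ∈ R` with `f (g s')` a unit multiple of `s'`, and let `S` be
the submonoid generated by these lifts. Localizing at two submonoids each of whose elements
divides an element of the other gives the same ring, so `S'⁻¹R'` is the localization of `R'` at
`f(S)`, which is `R' ⊗_R S⁻¹R` by base change of localizations.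
-/

theorem Set.Countable.submonoid_closure {M : Type*} [Monoid M] {s : Set M} (hs : s.Countable) :
    Countable (Submonoid.closure s) := by
  have := hs.to_subtype
  have : Countable (FreeMonoid s) := inferInstanceAs (Countable (List s))
  rw [Submonoid.closure_eq_mrange]
  exact (Set.countable_range (FreeMonoid.lift ((↑) : s → M))).to_subtype

theorem IsLocalization.iff_of_forall_exists_dvd {R S : Type*} [CommRing R] [CommRing S]
    [Algebra R S] {M N : Submonoid R} (hMN : ∀ m ∈ M, ∃ n ∈ N, m ∣ n)
    (hNM : ∀ n ∈ N, ∃ m ∈ M, n ∣ m) : IsLocalization M S ↔ IsLocalization N S := by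
  have dvd_of_mem_sup {P Q : Submonoid R} (hQP : ∀ q ∈ Q, ∃ p ∈ P, q ∣ p) :
      ∀ x ∈ P ⊔ Q, ∃ p ∈ P, x ∣ p := by
    intro x hx
    obtain ⟨p, hp, q, hq, rfl⟩ := Submonoid.mem_sup.mp hx
    obtain ⟨p', hp', hqp'⟩ := hQP q hq
    exact ⟨p * p', P.mul_mem hp hp', mul_dvd_mul_left p hqp'⟩
  rw [iff_of_le_of_exists_dvd M (M ⊔ N) le_sup_left (dvd_of_mem_sup hNM),
    iff_of_le_of_exists_dvd N (M ⊔ N) le_sup_right (by rw [sup_comm]; exact dvd_of_mem_sup hMN)]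

theorem Submonoid.exists_dvd_of_mem_closure {M : Type*} [CommMonoid M] {s : Set M}
    {N : Submonoid M} (hs : ∀ x ∈ s, ∃ n ∈ N, x ∣ n) : ∀ x ∈ closure s, ∃ n ∈ N, x ∣ n := by
  intro x hx
  induction hx using closure_induction with
  | mem x hx => exact hs x hx
  | one => exact ⟨1, N.one_mem, dvd_rfl⟩
  | mul x y _ _ hx hy =>
    obtain ⟨m, hm, hxm⟩ := hx
    obtain ⟨n, hn, hyn⟩ := hy
    exact ⟨m * n, N.mul_mem hm hn, mul_dvd_mul hxm hyn⟩

/-- Let `f : R → R'` be a ring homomorphism such that every element of `R'` is a unit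
multiple of an element in the image of `f`. Then for every countable multiplicative
subset `S' ⊆ R'` there is a countable multiplicative subset `S ⊆ R` with
`R' ⊗_R S⁻¹R ≅ S'⁻¹R'` as `R'`-algebras. -/
theorem stmt16 (R R' : Type u) [CommRing R] [CommRing R'] (f : R →+* R')
    (hf : ∀ r' : R', ∃ (u : R'ˣ) (r : R), r' = (u : R') * f r)
    (S' : Submonoid R') (hS' : Countable S') :
    letI : Algebra R R' := f.toAlgebra
    ∃ S : Submonoid R, Countable S ∧
      Nonempty ((TensorProduct R R' (Localization S)) ≃ₐ[R'] Localization S') := by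
  let : Algebra R R' := f.toAlgebra
  choose u g hg using fun s' : S' => hf s'
  let S := Submonoid.closure (Set.range g)
  refine ⟨S, (Set.countable_range g).submonoid_closure, ?_⟩
  have : IsLocalization (Algebra.algebraMapSubmonoid R' S) (Localization S') := by
    refine (IsLocalization.iff_of_forall_exists_dvd ?_ ?_).mp (inferInstance : IsLocalization S' _)
    · intro s' hs'
      refine ⟨f (g ⟨s', hs'⟩), Submonoid.mem_map_of_mem _ (Submonoid.subset_closure ⟨_, rfl⟩), ?_⟩
      calc s' = u _ * f (g _) := hg ⟨s', hs'⟩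
        _ ∣ f (g _) := Units.mul_left_dvd.mpr dvd_rfl
    · rw [Algebra.algebraMapSubmonoid, MonoidHom.map_mclosure, ← Set.range_comp]
      refine Submonoid.exists_dvd_of_mem_closure ?_
      rintro - ⟨s', rfl⟩
      exact ⟨s', s'.2, (hg s').symm ▸ dvd_mul_left _ _⟩
  exact ⟨IsLocalization.algEquiv (Algebra.algebraMapSubmonoid R' S) _ _⟩
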